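/- There exist unit vectors a, a', b, b' in ℝ³ such that the expectation of the Bell-CHSH operator B = (a·σ)⊗((b+b')·σ) + (a'·σ)⊗((b−b')·σ) in the singlet state |Ψ⁻⟩ = (|01⟩−|10⟩)/√2 equals 2√2, which exceeds 2; hence the singlet state is entangled. -/

import Mathlib

open Matrix Kronecker
open scoped ComplexOrder

def SepState {nA nB : Type*} [Fintype nA] [Fintype nB]
    (ρ : Matrix (nA × nB) (nA × nB) ℂ) : Prop :=
  ∃ (k : ℕ) (p : Fin k → ℝ) (a : Fin k → nA → ℂ) (b : Fin k → nB → ℂ),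
    (∀ i, 0 ≤ p i) ∧ (∑ i, p i = 1) ∧
    (∀ i, ∑ x, ‖a i x‖ ^ 2 = 1) ∧ (∀ i, ∑ x, ‖b i x‖ ^ 2 = 1) ∧
    ρ = ∑ i, (p i : ℂ) •
      (vecMulVec (a i) (star (a i)) ⊗ₖ vecMulVec (b i) (star (b i)))

def pauliX : Matrix (Fin 2) (Fin 2) ℂ := !![0, 1; 1, 0]
def pauliY : Matrix (Fin 2) (Fin 2) ℂ := !![0, -Complex.I; Complex.I, 0]
def pauliZ : Matrix (Fin 2) (Fin 2) ℂ := !![1, 0; 0, -1]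

noncomputable def dotSigma (v : Fin 3 → ℝ) : Matrix (Fin 2) (Fin 2) ℂ :=
  (v 0 : ℂ) • pauliX + (v 1 : ℂ) • pauliY + (v 2 : ℂ) • pauliZ

noncomputable def chshOp (a a' b b' : Fin 3 → ℝ) :
    Matrix ((Fin 2) × (Fin 2)) ((Fin 2) × (Fin 2)) ℂ :=
  dotSigma a ⊗ₖ dotSigma (b + b') + dotSigma a' ⊗ₖ dotSigma (b - b')

/-- The singlet state vector |Ψ⁻⟩ = (|01⟩ − |10⟩)/√2. -/
noncomputable def singletVec : Fin 2 × Fin 2 → ℂ := fun p =>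
  if p = (0, 1) then (1 / Real.sqrt 2 : ℝ)
  else if p = (1, 0) then (-(1 / Real.sqrt 2 : ℝ) : ℝ) else 0

/-- The singlet density matrix. -/
noncomputable def singletState : Matrix (Fin 2 × Fin 2) (Fin 2 × Fin 2) ℂ :=
  vecMulVec singletVec (star singletVec)

lemma sep_entry {k : ℕ} (p : Fin k → ℝ) (a b : Fin k → Fin 2 → ℂ)
    (x1 y1 x2 y2 : Fin 2) :
    (∑ i, (p i : ℂ) •
      (vecMulVec (a i) (star (a i)) ⊗ₖ vecMulVec (b i) (star (b i))))
        (x1, y1) (x2, y2)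
    = ∑ i, (p i : ℂ) * ((a i x1 * star (a i x2)) * (b i y1 * star (b i y2))) := by
  simp [Matrix.sum_apply, vecMulVec_apply, mul_comm]

lemma not_sep : ¬ SepState singletState := by
  rintro ⟨k, p, a, b, hp, -, -, -, hρ⟩
  have E1 : ∀ i, p i * Complex.normSq (a i 0) * Complex.normSq (b i 0) = 0 := by
    have h := congrArg (fun M => M ((0 : Fin 2), (0 : Fin 2)) (0, 0)) hρ
    simp only [singletState, vecMulVec_apply, sep_entry] at h
    have h0 : singletVec (0, 0) = 0 := by
      simp [singletVec, Prod.ext_iff]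
    rw [h0] at h
    simp only [Pi.star_apply, mul_zero, zero_mul] at h
    have h' : (0 : ℂ) = ∑ i, ((p i * Complex.normSq (a i 0) * Complex.normSq (b i 0) : ℝ) : ℂ) := by
      rw [h]
      congr 1; funext i
      simp only [Complex.star_def, Complex.mul_conj]
      push_cast; ring
    have h'' : (0 : ℝ) = ∑ i, p i * Complex.normSq (a i 0) * Complex.normSq (b i 0) := by
      exact_mod_cast h'
    intro i
    exact (Finset.sum_eq_zero_iff_of_nonneg (fun i _ =>
      mul_nonneg (mul_nonneg (hp i) (Complex.normSq_nonneg _)) (Complex.normSq_nonneg _))).mp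
      h''.symm i (Finset.mem_univ i)
  have h := congrArg (fun M => M ((0 : Fin 2), (1 : Fin 2)) (1, 0)) hρ
  simp only [singletState, vecMulVec_apply, sep_entry] at h
  have hl : singletVec (0, 1) * (star singletVec) (1, 0) = -(1/2 : ℂ) := by
    simp [singletVec, Pi.star_apply, Prod.ext_iff]
    norm_cast
    rw [← mul_inv, Real.mul_self_sqrt] <;> norm_num
  rw [hl] at h
  have hz : ∀ i ∈ Finset.univ, (p i : ℂ) * ((a i 0 * star (a i 1)) * (b i 1 * star (b i 0))) = 0 := by
    intro i _
    rcases mul_eq_zero.mp (E1 i) with h1 | h1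
    · rcases mul_eq_zero.mp h1 with h2 | h2
      · rw [h2]; simp
      · rw [Complex.normSq_eq_zero.mp h2]; simp
    · rw [Complex.normSq_eq_zero.mp h1]; simp
  rw [Finset.sum_eq_zero hz] at h
  norm_num at h

lemma trace_val :
    (chshOp ![0,0,1] ![1,0,0] ![-(Real.sqrt 2)⁻¹,0,-(Real.sqrt 2)⁻¹]
      ![(Real.sqrt 2)⁻¹,0,-(Real.sqrt 2)⁻¹] * singletState).trace
      = ((2 * Real.sqrt 2 : ℝ) : ℂ) := by
  simp only [chshOp, dotSigma, pauliX, pauliY, pauliZ, singletState, singletVec,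
    Matrix.trace, Matrix.diag, Matrix.mul_apply, Matrix.add_apply, Matrix.kroneckerMap_apply,
    Matrix.smul_apply, vecMulVec_apply, Pi.star_apply, Pi.add_apply, Pi.sub_apply,
    Fintype.sum_prod_type, Fin.sum_univ_succ, Fin.sum_univ_zero,
    Matrix.cons_val_zero, Matrix.cons_val_one, Matrix.head_cons, Matrix.cons_val',
    Matrix.empty_val', Matrix.cons_val_fin_one, Matrix.head_fin_const, Prod.mk.injEq]
  norm_num [Complex.ext_iff]
  ring_nf
  simp only [Matrix.cons_val]
  have h2 : Real.sqrt 2 ^ 2 = 2 := Real.sq_sqrt (by norm_num)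
  have hne : Real.sqrt 2 ≠ 0 := by positivity
  field_simp
  ring_nf
  rw [h2]
  ring_nf

/-- There are unit vectors a, a', b, b' for which the CHSH expectation in the singlet
state is 2√2 > 2; hence the singlet state is entangled. -/
theorem stmt4 :
    ∃ a a' b b' : Fin 3 → ℝ,
      (∑ i, (a i) ^ 2 = 1) ∧ (∑ i, (a' i) ^ 2 = 1) ∧
      (∑ i, (b i) ^ 2 = 1) ∧ (∑ i, (b' i) ^ 2 = 1) ∧
      (chshOp a a' b b' * singletState).trace = ((2 * Real.sqrt 2 : ℝ) : ℂ) ∧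
      (2 : ℝ) < 2 * Real.sqrt 2 ∧
      ¬ SepState singletState := by
  refine ⟨![0,0,1], ![1,0,0], ![-(Real.sqrt 2)⁻¹,0,-(Real.sqrt 2)⁻¹],
    ![(Real.sqrt 2)⁻¹,0,-(Real.sqrt 2)⁻¹], ?_, ?_, ?_, ?_, trace_val, ?_, not_sep⟩
  · simp [Fin.sum_univ_three]
  · simp [Fin.sum_univ_three]
  · simp [Fin.sum_univ_three, inv_pow]
    norm_num
  · simp [Fin.sum_univ_three, inv_pow]
    norm_num
  · nlinarith [Real.sq_sqrt (by norm_num : (2:ℝ) ≥ 0), Real.sqrt_pos.mpr (by norm_num : (2:ℝ) > 0),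
      Real.sqrt_lt_sqrt (by norm_num : (1:ℝ) ≥ 0) (by norm_num : (1:ℝ) < 2), Real.sqrt_one]
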